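/- For every natural number m and every element x of a field of rational functions (or for all complex q, x avoiding poles), one has 1 = \sum_{k=0}^{m} (1 + x q^k) \binom{m}{k}_q \frac{(x;q)_{m+1}}{(q^k x^2;q)_{m+1}} x^k q^{k^2}, where \binom{m}{k}_q is the Gaussian binomial coefficient and (a;q)_n = \prod_{j=0}^{n-1}(1 - a q^j). -/

import Mathlib

/-!
Write `T_m(k) = (1 + x q^k) [m, k]_q (x;q)_(m+1) / (q^k x²;q)_(m+1) x^k q^(k²)` for the summand.
The identity `∑_k T_m(k) = 1` is proved by induction on `m` with a WZ-style certificate `G_m` (`quintupleCert`):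
for `k ≤ m` one has `T_(m+1)(k) = T_m(k) + G_m(k+1) - G_m(k)`, and the new last term is
`T_(m+1)(m+1) = -G_m(m+1)`, so the sum over `k ≤ m + 1` telescopes back to `∑_k T_m(k)`.
Both relations reduce to rational identities in `x`, `q^k` and `q^(m-k)` once all terms are
expressed through the common factor `[m, k]_q (x;q)_(m+1) / (q^k x²;q)_(m+1) x^k q^(k²)`
(`quintupleWeight`).
-/

/-- The q-shifted factorial `(a;q)_n = ∏_{j=0}^{n-1} (1 - a q^j)`. -/
noncomputable def qPoch {F : Type*} [Field F] (a q : F) (n : ℕ) : F :=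
  ∏ j ∈ Finset.range n, (1 - a * q ^ j)

/-- The Gaussian binomial coefficient `(q;q)_m / ((q;q)_k (q;q)_{m-k})`. -/
noncomputable def qBinom {F : Type*} [Field F] (q : F) (m k : ℕ) : F :=
  qPoch q q m / (qPoch q q k * qPoch q q (m - k))

section QPochhammer

variable {F : Type*} [Field F]

theorem qPoch_zero (a q : F) : qPoch a q 0 = 1 :=
  Finset.prod_range_zero _

theorem qPoch_succ (a q : F) (n : ℕ) : qPoch a q (n + 1) = qPoch a q n * (1 - a * q ^ n) :=
  Finset.prod_range_succ _ _

theorem qPoch_q_mul_mul_one_sub (a q : F) (n : ℕ) :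
    qPoch (q * a) q n * (1 - a) = qPoch a q n * (1 - a * q ^ n) := by
  rw [← qPoch_succ]
  simp only [qPoch, Finset.prod_range_succ', pow_succ', pow_zero, mul_one, mul_assoc, mul_left_comm q]

theorem qPoch_ne_zero {a q : F} {n : ℕ} (h : ∀ j < n, 1 - a * q ^ j ≠ 0) : qPoch a q n ≠ 0 :=
  Finset.prod_ne_zero_iff.mpr fun j hj => h j (Finset.mem_range.mp hj)

theorem qPoch_self_ne_zero {q : F} (hq : ∀ j : ℕ, 1 - q ^ (j + 1) ≠ 0) (n : ℕ) :
    qPoch q q n ≠ 0 :=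
  qPoch_ne_zero fun j _ => by simpa only [pow_succ'] using hq j

theorem qBinom_self {q : F} {n : ℕ} (h : qPoch q q n ≠ 0) : qBinom q n n = 1 := by
  rw [qBinom, Nat.sub_self, qPoch_zero, mul_one, div_self h]

theorem qBinom_succ_left (q : F) {m k : ℕ} (hk : k ≤ m) :
    qBinom q (m + 1) k = qBinom q m k * ((1 - q ^ (m + 1)) / (1 - q ^ (m + 1 - k))) := by
  rw [qBinom, qBinom, Nat.sub_add_comm hk, qPoch_succ q q m, qPoch_succ q q (m - k), ← mul_assoc,
    mul_div_mul_comm]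
  ring

theorem qBinom_eq_qBinom_succ_right_mul (q : F) {m j : ℕ} (hj : j < m)
    (h₁ : 1 - q ^ (j + 1) ≠ 0) (h₂ : 1 - q ^ (m - j) ≠ 0) :
    qBinom q m j = qBinom q m (j + 1) * ((1 - q ^ (j + 1)) / (1 - q ^ (m - j))) := by
  obtain ⟨i, rfl⟩ := Nat.exists_eq_add_of_lt hj
  rw [qBinom, qBinom, show j + i + 1 - j = i + 1 by omega, show j + i + 1 - (j + 1) = i by omega,
    qPoch_succ q q i, qPoch_succ q q j, ← pow_succ', ← pow_succ']
  rw [show j + i + 1 - j = i + 1 by omega] at h₂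
  field_simp

end QPochhammer

section QuintupleProduct

variable {F : Type*} [Field F] (q x : F)

noncomputable def quintupleWeight (m k : ℕ) : F :=
  qBinom q m k * (qPoch x q (m + 1) / qPoch (q ^ k * x ^ 2) q (m + 1)) * x ^ k * q ^ (k ^ 2)

noncomputable def quintupleCert (m : ℕ) : ℕ → F
  | 0 => 0
  | j + 1 => -q ^ (m - j) * qBinom q m j *
      (qPoch x q (m + 1) / qPoch (q ^ (j + 1) * x ^ 2) q (m + 1)) * x ^ (j + 1) * q ^ ((j + 1) ^ 2)

/-- The telescoping step `T_(m+1)(k) - T_m(k) = G_m(k+1) - G_m(k)` divided by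
`quintupleWeight q x m k`, written with `a = q^k` and `u = q^(m-k)`. -/
theorem quintuple_rational_identity {a u : F} (h₁ : 1 - q * u ≠ 0)
    (h₂ : 1 - q * a ^ 2 * u * x ^ 2 ≠ 0) :
    (1 + x * a) * ((1 - q * a * u) / (1 - q * u)) * ((1 - q * a * u * x) / (1 - q * a ^ 2 * u * x ^ 2))
      = 1 + x * a - q * a ^ 2 * u * x * (1 - a * x ^ 2) / (1 - q * a ^ 2 * u * x ^ 2)
        + (1 - a) * q * u / (1 - q * u) := by
  generalize hd : 1 - q * a ^ 2 * u * x ^ 2 = d at h₂ ⊢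
  field_simp
  rw [← hd]
  ring

theorem quintupleWeight_succ_left {m k : ℕ} (hk : k ≤ m) :
    quintupleWeight q x (m + 1) k = quintupleWeight q x m k *
      ((1 - q ^ (m + 1)) / (1 - q ^ (m + 1 - k)) *
        ((1 - x * q ^ (m + 1)) / (1 - q ^ k * x ^ 2 * q ^ (m + 1)))) := by
  rw [quintupleWeight, quintupleWeight, qBinom_succ_left q hk, qPoch_succ x q (m + 1),
    qPoch_succ _ q (m + 1), mul_div_mul_comm]
  ring

theorem quintupleCert_succ {m k : ℕ} (hx : 1 - q ^ k * x ^ 2 ≠ 0) :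
    quintupleCert q x m (k + 1) = -(q ^ (m - k) * x * q ^ (2 * k + 1) *
      ((1 - q ^ k * x ^ 2) / (1 - q ^ k * x ^ 2 * q ^ (m + 1)))) * quintupleWeight q x m k := by
  have hshift : qPoch (q ^ (k + 1) * x ^ 2) q (m + 1) =
      qPoch (q ^ k * x ^ 2) q (m + 1) * (1 - q ^ k * x ^ 2 * q ^ (m + 1)) / (1 - q ^ k * x ^ 2) := by
    rw [← qPoch_q_mul_mul_one_sub, pow_succ', mul_assoc, mul_div_cancel_right₀ _ hx]
  rw [quintupleCert, quintupleWeight, hshift, div_div_eq_mul_div, div_mul_eq_div_div]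
  ring

theorem quintupleCert_eq {m k : ℕ} (hk : k ≤ m) (hq : ∀ j : ℕ, 1 - q ^ (j + 1) ≠ 0) :
    quintupleCert q x m k =
      -((1 - q ^ k) * q ^ (m + 1 - k) / (1 - q ^ (m + 1 - k))) * quintupleWeight q x m k := by
  cases k with
  | zero => simp [quintupleCert]
  | succ j =>
    have hmj : 1 - q ^ (m - j) ≠ 0 := by
      simpa only [show m - j = m - (j + 1) + 1 by omega] using hq (m - (j + 1))
    rw [quintupleCert, quintupleWeight, qBinom_eq_qBinom_succ_right_mul q hk (hq j) hmj,
      show m + 1 - (j + 1) = m - j by omega]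
    ring

theorem one_add_mul_one_sub_div_one_sub_sq {y : F} (hy : 1 - y ^ 2 ≠ 0) :
    (1 + y) * ((1 - y) / (1 - y ^ 2)) = 1 := by
  rw [← mul_div_assoc, div_eq_one_iff_eq hy]
  ring

theorem one_add_mul_quintupleWeight_zero (hx : 1 - x ^ 2 ≠ 0) :
    (1 + x * q ^ 0) * quintupleWeight q x 0 0 = 1 := by
  rw [quintupleWeight, qBinom_self (by rw [qPoch_zero]; exact one_ne_zero), zero_add, qPoch_succ,
    qPoch_succ, qPoch_zero, qPoch_zero]
  simpa only [pow_zero, one_mul, mul_one, zero_pow two_ne_zero] using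
    one_add_mul_one_sub_div_one_sub_sq hx

theorem one_add_mul_quintupleWeight_succ_left (hx : ∀ j : ℕ, 1 - x ^ 2 * q ^ j ≠ 0)
    (hq : ∀ j : ℕ, 1 - q ^ (j + 1) ≠ 0) {m k : ℕ} (hk : k ≤ m) :
    (1 + x * q ^ k) * quintupleWeight q x (m + 1) k = (1 + x * q ^ k) * quintupleWeight q x m k +
      (quintupleCert q x m (k + 1) - quintupleCert q x m k) := by
  have hxk : 1 - q ^ k * x ^ 2 ≠ 0 := by simpa only [mul_comm] using hx k
  rw [quintupleWeight_succ_left q x hk, quintupleCert_succ q x hxk, quintupleCert_eq q x hk hq]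
  have hm : q ^ (m + 1) = q * q ^ k * q ^ (m - k) := by
    rw [mul_assoc, ← pow_add, Nat.add_sub_cancel' hk, pow_succ']
  have h₁ : 1 - q * q ^ (m - k) ≠ 0 := by simpa only [pow_succ'] using hq (m - k)
  have h₂ : 1 - q * (q ^ k) ^ 2 * q ^ (m - k) * x ^ 2 ≠ 0 := by
    convert hx (m + 1 + k) using 2
    rw [pow_add, hm]
    ring
  rw [show m + 1 - k = m - k + 1 by omega, hm]
  linear_combination quintupleWeight q x m k * quintuple_rational_identity q x h₁ h₂

theorem one_add_mul_quintupleWeight_succ_self (hx : ∀ j : ℕ, 1 - x ^ 2 * q ^ j ≠ 0)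
    (hq : ∀ j : ℕ, 1 - q ^ (j + 1) ≠ 0) (m : ℕ) :
    (1 + x * q ^ (m + 1)) * quintupleWeight q x (m + 1) (m + 1) = -quintupleCert q x m (m + 1) := by
  have hy : 1 - (x * q ^ (m + 1)) ^ 2 ≠ 0 := by
    convert hx (m + 1 + (m + 1)) using 2
    ring
  rw [quintupleWeight, quintupleCert, qBinom_self (qPoch_self_ne_zero hq _),
    qBinom_self (qPoch_self_ne_zero hq _), Nat.sub_self, qPoch_succ x q (m + 1),
    qPoch_succ (q ^ (m + 1) * x ^ 2) q (m + 1), mul_div_mul_comm,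
    show q ^ (m + 1) * x ^ 2 * q ^ (m + 1) = (x * q ^ (m + 1)) ^ 2 by ring]
  linear_combination qPoch x q (m + 1) / qPoch (q ^ (m + 1) * x ^ 2) q (m + 1) * x ^ (m + 1) *
    q ^ (m + 1) ^ 2 * one_add_mul_one_sub_div_one_sub_sq hy

theorem sum_one_add_mul_quintupleWeight (hx : ∀ j : ℕ, 1 - x ^ 2 * q ^ j ≠ 0)
    (hq : ∀ j : ℕ, 1 - q ^ (j + 1) ≠ 0) (m : ℕ) :
    ∑ k ∈ Finset.range (m + 1), (1 + x * q ^ k) * quintupleWeight q x m k = 1 := by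
  induction m with
  | zero =>
    rw [Finset.sum_range_one]
    exact one_add_mul_quintupleWeight_zero q x (by simpa only [pow_zero, mul_one] using hx 0)
  | succ m ih =>
    calc ∑ k ∈ Finset.range (m + 2), (1 + x * q ^ k) * quintupleWeight q x (m + 1) k
        = ∑ k ∈ Finset.range (m + 1), ((1 + x * q ^ k) * quintupleWeight q x m k +
            (quintupleCert q x m (k + 1) - quintupleCert q x m k)) - quintupleCert q x m (m + 1) := by
          rw [Finset.sum_range_succ, one_add_mul_quintupleWeight_succ_self q x hx hq,
            Finset.sum_congr rfl fun k hk => one_add_mul_quintupleWeight_succ_left q x hx hq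
              (Nat.lt_succ_iff.mp (Finset.mem_range.mp hk)), sub_eq_add_neg]
      _ = 1 := by
          rw [Finset.sum_add_distrib, ih, Finset.sum_range_sub, quintupleCert]
          ring

end QuintupleProduct

/-- Finite form of the quintuple product identity. -/
theorem finite_quintuple_product {F : Type*} [Field F] (q x : F) (m : ℕ)
    (hx : ∀ j : ℕ, 1 - x ^ 2 * q ^ j ≠ 0) (hq : ∀ j : ℕ, 1 - q ^ (j + 1) ≠ 0) :
    1 = ∑ k ∈ Finset.range (m + 1),
      (1 + x * q ^ k) * qBinom q m k *
        (qPoch x q (m + 1) / qPoch (q ^ k * x ^ 2) q (m + 1)) * x ^ k * q ^ (k ^ 2) := by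
  refine (sum_one_add_mul_quintupleWeight q x hx hq m).symm.trans
    (Finset.sum_congr rfl fun k _ => ?_)
  rw [quintupleWeight]
  ring
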